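/- arXiv:0909.0726 — 12 statements merged into one kernel-verified Lean document; each statement's English description precedes it below -/
import Mathlib

section
/- Let (A, μ) be a Novikov algebra (a left-symmetric algebra satisfying (xy)z = (xz)y) over a field of characteristic 0, and let α: A → A be an algebra morphism (α∘μ = μ∘(α⊗α)). Define μ_α = α∘μ. Then (A, μ_α, α) is a Hom-Novikov algebra, i.e., α is multiplicative with respect to μ_α, and for all x,y,z: μ_α(μ_α(x,y),α(z)) − μ_α(α(x),μ_α(y,z)) = μ_α(μ_α(y,x),α(z)) − μ_α(α(y),μ_α(x,z)), and μ_α(μ_α(x,y),α(z)) = μ_α(μ_α(x,z),α(y)). -/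
/-! The twisted products `α (μ (α (μ x y)) (α z))` and `α (μ (α x) (α (μ y z)))` are `α (α _)`
applied to the untwisted products `μ (μ x y) z` and `μ x (μ y z)`, because `α` is multiplicative.
So every Hom-Novikov identity for `μα = α ∘ μ` is `α ∘ α` applied to the Novikov identity
for `μ`. -/

section YauTwist

variable {A : Type*}

theorem twist_mul_map_map {μ : A → A → A} {α : A → A}
    (hα : ∀ x y, α (μ x y) = μ (α x) (α y)) (a b : A) :
    α (μ (α a) (α b)) = α (α (μ a b)) := by
  rw [hα a b]

theorem twist_right_comm {μ : A → A → A} {α : A → A}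
    (hα : ∀ x y, α (μ x y) = μ (α x) (α y)) (hnov : ∀ x y z, μ (μ x y) z = μ (μ x z) y)
    (x y z : A) :
    α (μ (α (μ x y)) (α z)) = α (μ (α (μ x z)) (α y)) := by
  rw [twist_mul_map_map hα, twist_mul_map_map hα, hnov]

theorem twist_left_symm [AddCommGroup A] {F : Type*} [FunLike F A A]
    [AddMonoidHomClass F A A] {μ : A → A → A} {α : F}
    (hα : ∀ x y, α (μ x y) = μ (α x) (α y))
    (hls : ∀ x y z, μ (μ x y) z - μ x (μ y z) = μ (μ y x) z - μ y (μ x z)) (x y z : A) :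
    α (μ (α (μ x y)) (α z)) - α (μ (α x) (α (μ y z))) =
      α (μ (α (μ y x)) (α z)) - α (μ (α y) (α (μ x z))) := by
  simp only [twist_mul_map_map hα, ← map_sub]
  rw [hls]

end YauTwist

theorem novikov_twist_is_hom_novikov_general
    {K A : Type*} [Field K] [AddCommGroup A] [Module K A]
    (μ : A →ₗ[K] A →ₗ[K] A)
    (hls : ∀ x y z : A, μ (μ x y) z - μ x (μ y z) = μ (μ y x) z - μ y (μ x z))
    (hnov : ∀ x y z : A, μ (μ x y) z = μ (μ x z) y)
    (α : A →ₗ[K] A) (hα : ∀ x y : A, α (μ x y) = μ (α x) (α y))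
    (μα : A → A → A) (hμα : ∀ x y : A, μα x y = α (μ x y)) :
    (∀ x y : A, α (μα x y) = μα (α x) (α y)) ∧
    (∀ x y z : A,
      μα (μα x y) (α z) - μα (α x) (μα y z) =
      μα (μα y x) (α z) - μα (α y) (μα x z)) ∧
    (∀ x y z : A, μα (μα x y) (α z) = μα (μα x z) (α y)) := by
  obtain rfl : μα = fun x y => α (μ x y) := funext₂ hμα
  exact ⟨fun x y => (twist_mul_map_map hα x y).symm, twist_left_symm hα hls,
    twist_right_comm hα hnov⟩

/-- Hom-Novikov deformation of a Novikov algebra along an algebra morphism. -/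
theorem novikov_twist_is_hom_novikov
    {K A : Type*} [Field K] [CharZero K] [AddCommGroup A] [Module K A]
    (μ : A →ₗ[K] A →ₗ[K] A)
    (hls : ∀ x y z : A, μ (μ x y) z - μ x (μ y z) = μ (μ y x) z - μ y (μ x z))
    (hnov : ∀ x y z : A, μ (μ x y) z = μ (μ x z) y)
    (α : A →ₗ[K] A) (hα : ∀ x y : A, α (μ x y) = μ (α x) (α y))
    (μα : A → A → A) (hμα : ∀ x y : A, μα x y = α (μ x y)) :
    (∀ x y : A, α (μα x y) = μα (α x) (α y)) ∧
    (∀ x y z : A,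
      μα (μα x y) (α z) - μα (α x) (μα y z) =
      μα (μα y x) (α z) - μα (α y) (μα x z)) ∧
    (∀ x y z : A, μα (μα x y) (α z) = μα (μα x z) (α y)) :=
  novikov_twist_is_hom_novikov_general μ hls hnov α hα μα hμα
end

section
/- Let (A, μ, α) be a Hom-commutative algebra (a Hom-associative algebra with commutative multiplication) and D: A → A a derivation (D(xy) = D(x)y + xD(y)) with Dα = αD. Define x * y = xD(y). Then (A, *, α) is a Hom-Novikov algebra. -/
/-! With `x * y = x D(y)`, Hom-associativity and `Dα = αD` give
`(x * y) * α(z) = α(x) (D(y) D(z))`, which is symmetric in `y, z` by commutativity.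
Expanding `α(x) * (y * z)` by the Leibniz rule, the associator `(x * y) * α(z) - α(x) * (y * z)`
reduces to `-α(x) (y D²(z))`, and this is symmetric in `x, y` because in a Hom-commutative
Hom-associative algebra `α(x) (y w) = (w y) α(x) = α(w) (y x)`. -/

section HomCommutative

variable {R A : Type*} [CommRing R] [AddCommGroup A] [Module R A]
  (μ : A →ₗ[R] A →ₗ[R] A) (α D : A →ₗ[R] A)

theorem homAssoc_left_comm (hassoc : ∀ x y z : A, μ (μ x y) (α z) = μ (α x) (μ y z))
    (hcomm : ∀ x y : A, μ x y = μ y x) (x y w : A) :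
    μ (α x) (μ y w) = μ (α y) (μ x w) :=
  calc μ (α x) (μ y w) = μ (μ w y) (α x) := by rw [hcomm, hcomm y w]
    _ = μ (α w) (μ x y) := by rw [hassoc, hcomm y x]
    _ = μ (α y) (μ x w) := by rw [← hassoc, hcomm, hcomm w x]

theorem map_mul_deriv (hmul : ∀ x y : A, α (μ x y) = μ (α x) (α y))
    (hDα : ∀ x : A, D (α x) = α (D x)) (x y : A) :
    α (μ x (D y)) = μ (α x) (D (α y)) := by
  rw [hmul, hDα]

theorem mul_deriv_mul_deriv (hassoc : ∀ x y z : A, μ (μ x y) (α z) = μ (α x) (μ y z))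
    (hDα : ∀ x : A, D (α x) = α (D x)) (x y z : A) :
    μ (μ x (D y)) (D (α z)) = μ (α x) (μ (D y) (D z)) := by
  rw [hDα, hassoc]

theorem mul_deriv_associator (hassoc : ∀ x y z : A, μ (μ x y) (α z) = μ (α x) (μ y z))
    (hD : ∀ x y : A, D (μ x y) = μ (D x) y + μ x (D y))
    (hDα : ∀ x : A, D (α x) = α (D x)) (x y z : A) :
    μ (μ x (D y)) (D (α z)) - μ (α x) (D (μ y (D z))) = -μ (α x) (μ y (D (D z))) := by
  rw [mul_deriv_mul_deriv μ α D hassoc hDα, hD, map_add]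
  abel

end HomCommutative

theorem hom_commutative_derivation_gives_hom_novikov
    {K A : Type*} [Field K] [AddCommGroup A] [Module K A]
    (μ : A →ₗ[K] A →ₗ[K] A) (α : A →ₗ[K] A)
    (hmul : ∀ x y : A, α (μ x y) = μ (α x) (α y))
    (hassoc : ∀ x y z : A, μ (μ x y) (α z) = μ (α x) (μ y z))
    (hcomm : ∀ x y : A, μ x y = μ y x)
    (D : A →ₗ[K] A)
    (hD : ∀ x y : A, D (μ x y) = μ (D x) y + μ x (D y))
    (hDα : ∀ x : A, D (α x) = α (D x))
    (s : A → A → A) (hs : ∀ x y : A, s x y = μ x (D y)) :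
    (∀ x y : A, α (s x y) = s (α x) (α y)) ∧
    (∀ x y z : A,
      s (s x y) (α z) - s (α x) (s y z) =
      s (s y x) (α z) - s (α y) (s x z)) ∧
    (∀ x y z : A, s (s x y) (α z) = s (s x z) (α y)) := by
  obtain rfl : s = fun x y => μ x (D y) := funext₂ hs
  refine ⟨map_mul_deriv μ α D hmul hDα, fun x y z => ?_, fun x y z => ?_⟩
  · simp only [mul_deriv_associator μ α D hassoc hD hDα,
      homAssoc_left_comm μ α hassoc hcomm x y]
  · simp only [mul_deriv_mul_deriv μ α D hassoc hDα, hcomm (D y) (D z)]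
end

section
/- Let (A, μ, α) be a Hom-commutative algebra and D a derivation with Dα = αD. Then for all x,y,z ∈ A: (x*y)*α(z) − α(x)*(y*z) = −(xy)α(D²(z)), where x*y = xD(y). -/
theorem hom_left_symmetry_defect_general
    {K A : Type*} [Field K] [AddCommGroup A] [Module K A]
    (μ : A →ₗ[K] A →ₗ[K] A) (α : A →ₗ[K] A)
    (hassoc : ∀ x y z : A, μ (μ x y) (α z) = μ (α x) (μ y z))
    (D : A →ₗ[K] A)
    (hD : ∀ x y : A, D (μ x y) = μ (D x) y + μ x (D y))
    (hDα : ∀ x : A, D (α x) = α (D x))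
    (s : A → A → A) (hs : ∀ x y : A, s x y = μ x (D y)) :
    ∀ x y z : A,
      s (s x y) (α z) - s (α x) (s y z) = - μ (μ x y) (α (D (D z))) := by
  intro x y z
  simp only [hs, hDα]
  calc μ (μ x (D y)) (α (D z)) - μ (α x) (D (μ y (D z)))
      = μ (α x) (μ (D y) (D z)) - μ (α x) (μ (D y) (D z) + μ y (D (D z))) := by
        rw [hassoc, hD]
    _ = - μ (α x) (μ y (D (D z))) := by rw [map_add]; abel
    _ = - μ (μ x y) (α (D (D z))) := by rw [hassoc]

theorem hom_left_symmetry_defect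
    {K A : Type*} [Field K] [AddCommGroup A] [Module K A]
    (μ : A →ₗ[K] A →ₗ[K] A) (α : A →ₗ[K] A)
    (hmul : ∀ x y : A, α (μ x y) = μ (α x) (α y))
    (hassoc : ∀ x y z : A, μ (μ x y) (α z) = μ (α x) (μ y z))
    (hcomm : ∀ x y : A, μ x y = μ y x)
    (D : A →ₗ[K] A)
    (hD : ∀ x y : A, D (μ x y) = μ (D x) y + μ x (D y))
    (hDα : ∀ x : A, D (α x) = α (D x))
    (s : A → A → A) (hs : ∀ x y : A, s x y = μ x (D y)) :
    ∀ x y z : A,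
      s (s x y) (α z) - s (α x) (s y z) = - μ (μ x y) (α (D (D z))) :=
  hom_left_symmetry_defect_general μ α hassoc D hD hDα s hs
end

section
/- Let (A, μ, α) be a Hom-commutative algebra and D a derivation with Dα = αD. Then (x*y)*α(z) = α(x)(D(y)D(z)) for all x,y,z, where x*y = xD(y); in particular (x*y)*α(z) = (x*z)*α(y). -/
theorem hom_novikov_second_axiom_for_star_general
    {K A : Type*} [Field K] [AddCommGroup A] [Module K A]
    (μ : A →ₗ[K] A →ₗ[K] A) (α : A →ₗ[K] A)
    (hassoc : ∀ x y z : A, μ (μ x y) (α z) = μ (α x) (μ y z))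
    (hcomm : ∀ x y : A, μ x y = μ y x)
    (D : A →ₗ[K] A)
    (hDα : ∀ x : A, D (α x) = α (D x))
    (s : A → A → A) (hs : ∀ x y : A, s x y = μ x (D y)) :
    ∀ x y z : A,
      s (s x y) (α z) = μ (α x) (μ (D y) (D z)) ∧
      s (s x y) (α z) = s (s x z) (α y) := by
  have star_star_alpha : ∀ x y z : A, s (s x y) (α z) = μ (α x) (μ (D y) (D z)) := by
    intro x y z
    rw [hs, hs, hDα, hassoc]
  intro x y z
  exact ⟨star_star_alpha x y z, by rw [star_star_alpha, star_star_alpha, hcomm (D y)]⟩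

theorem hom_novikov_second_axiom_for_star
    {K A : Type*} [Field K] [AddCommGroup A] [Module K A]
    (μ : A →ₗ[K] A →ₗ[K] A) (α : A →ₗ[K] A)
    (hmul : ∀ x y : A, α (μ x y) = μ (α x) (α y))
    (hassoc : ∀ x y z : A, μ (μ x y) (α z) = μ (α x) (μ y z))
    (hcomm : ∀ x y : A, μ x y = μ y x)
    (D : A →ₗ[K] A)
    (hD : ∀ x y : A, D (μ x y) = μ (D x) y + μ x (D y))
    (hDα : ∀ x : A, D (α x) = α (D x))
    (s : A → A → A) (hs : ∀ x y : A, s x y = μ x (D y)) :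
    ∀ x y z : A,
      s (s x y) (α z) = μ (α x) (μ (D y) (D z)) ∧
      s (s x y) (α z) = s (s x z) (α y) :=
  hom_novikov_second_axiom_for_star_general μ α hassoc hcomm D hDα s hs
end

section
/- Let (A, μ) be an associative and commutative algebra, α: A → A an algebra morphism, and D: A → A a derivation with Dα = αD. Define x * y = α(xD(y)). Then (A, *, α) is a Hom-Novikov algebra. -/
/-! The Hom-Novikov identities for `x ⋆ y = α (x * D y)` reduce to two computations:
`(x ⋆ y) ⋆ α z = α² (x * D y * D z)`, which is symmetric in `y` and `z`, and, by the Leibniz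
rule, `α x ⋆ (y ⋆ z) = α² (x * D y * D z) + α² (x * y * D (D z))`. Hence the Hom-associator
equals `-α² (x * y * D (D z))`, which is symmetric in `x` and `y`. -/

section TwistedMul

variable {A : Type*} [CommRing A]

def twistedMul (α : A →ₙ+* A) (D : A → A) (x y : A) : A :=
  α (x * D y)

variable (α : A →ₙ+* A) {D : A → A}

theorem map_twistedMul (hDα : ∀ x, D (α x) = α (D x)) (x y : A) :
    α (twistedMul α D x y) = twistedMul α D (α x) (α y) := by
  simp only [twistedMul, map_mul, hDα]

theorem twistedMul_twistedMul_map (hDα : ∀ x, D (α x) = α (D x)) (x y z : A) :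
    twistedMul α D (twistedMul α D x y) (α z) = α (α (x * D y * D z)) := by
  simp only [twistedMul, map_mul, hDα]

theorem map_twistedMul_twistedMul (hD : ∀ x y, D (x * y) = D x * y + x * D y)
    (hDα : ∀ x, D (α x) = α (D x)) (x y z : A) :
    twistedMul α D (α x) (twistedMul α D y z) =
      α (α (x * D y * D z)) + α (α (x * y * D (D z))) := by
  simp only [twistedMul, hDα, hD, map_add, map_mul]
  ring

theorem twistedMul_homAssociator (hD : ∀ x y, D (x * y) = D x * y + x * D y)
    (hDα : ∀ x, D (α x) = α (D x)) (x y z : A) :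
    twistedMul α D (twistedMul α D x y) (α z) - twistedMul α D (α x) (twistedMul α D y z) =
      -α (α (x * y * D (D z))) := by
  rw [twistedMul_twistedMul_map α hDα, map_twistedMul_twistedMul α hD hDα]
  ring

end TwistedMul

theorem comm_assoc_twisted_derivation_hom_novikov_general
    {K A : Type*} [Field K] [CommRing A] [Algebra K A]
    (α : A →ₗ[K] A) (hα : ∀ x y : A, α (x * y) = α x * α y)
    (D : A →ₗ[K] A) (hD : ∀ x y : A, D (x * y) = D x * y + x * D y)
    (hDα : ∀ x : A, D (α x) = α (D x))
    (s : A → A → A) (hs : ∀ x y : A, s x y = α (x * D y)) :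
    (∀ x y : A, α (s x y) = s (α x) (α y)) ∧
    (∀ x y z : A,
      s (s x y) (α z) - s (α x) (s y z) =
      s (s y x) (α z) - s (α y) (s x z)) ∧
    (∀ x y z : A, s (s x y) (α z) = s (s x z) (α y)) := by
  let αₘ : A →ₙ+* A := { α.toAddMonoidHom with map_mul' := hα }
  have hs' : s = twistedMul αₘ D := funext₂ hs
  have hDαₘ : ∀ x, D (αₘ x) = αₘ (D x) := hDα
  rw [show ⇑α = ⇑αₘ from rfl, hs']
  refine ⟨map_twistedMul αₘ hDαₘ, fun x y z => ?_, fun x y z => ?_⟩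
  · rw [twistedMul_homAssociator αₘ hD hDαₘ, twistedMul_homAssociator αₘ hD hDαₘ, mul_comm x y]
  · rw [twistedMul_twistedMul_map αₘ hDαₘ, twistedMul_twistedMul_map αₘ hDαₘ, mul_right_comm]

theorem comm_assoc_twisted_derivation_hom_novikov
    {K A : Type*} [Field K] [CharZero K] [CommRing A] [Algebra K A]
    (α : A →ₗ[K] A) (hα : ∀ x y : A, α (x * y) = α x * α y)
    (D : A →ₗ[K] A) (hD : ∀ x y : A, D (x * y) = D x * y + x * D y)
    (hDα : ∀ x : A, D (α x) = α (D x))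
    (s : A → A → A) (hs : ∀ x y : A, s x y = α (x * D y)) :
    (∀ x y : A, α (s x y) = s (α x) (α y)) ∧
    (∀ x y z : A,
      s (s x y) (α z) - s (α x) (s y z) =
      s (s y x) (α z) - s (α y) (s x z)) ∧
    (∀ x y z : A, s (s x y) (α z) = s (s x z) (α y)) :=
  comm_assoc_twisted_derivation_hom_novikov_general α hα D hD hDα s hs
end

section
/- Let (L, [−,−], α) be a Hom-Lie algebra and f: L → L linear with fα = αf. Define x ⋆ y = [f(x), y]. Then (L, ⋆, α) is a Hom-Novikov algebra if and only if for all x,y,z ∈ L: f([f(x),y] + [x,f(y)]) − [f(x),f(y)] ∈ Z(α(L)) and [f([f(x),y]), α(z)] = [f([f(x),z]), α(y)], where Z(α(L)) = {w ∈ L : [w, α(u)] = 0 for all u ∈ L}. -/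
/-!
With `x ⋆ y = [f x, y]`, the Hom-Jacobi identity in Leibniz form
`[α a, [b, z]] - [α b, [a, z]] = [[a, b], α z]` rewrites the difference of the two sides of
left-symmetry as `[f([f x, y] + [x, f y]) - [f x, f y], α z]`, so left-symmetry is the centrality
condition. Right-commutativity of `⋆` is literally the second condition, and multiplicativity of
`α` for `⋆` is automatic from `f α = α f`.
-/

section HomLie

variable {R L : Type*} [CommRing R] [AddCommGroup L] [Module R L]
  (B : L →ₗ[R] L →ₗ[R] L) (α : L →ₗ[R] L)

theorem homJacobi_leibniz (hskew : ∀ x y : L, B x y = - B y x)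
    (hjac : ∀ x y z : L, B (B x y) (α z) + B (B z x) (α y) + B (B y z) (α x) = 0)
    (a b z : L) :
    B (α a) (B b z) - B (α b) (B a z) = B (B a b) (α z) := by
  have hj := hjac a b z
  rw [hskew z a, map_neg, LinearMap.neg_apply] at hj
  rw [hskew (α a) (B b z), hskew (α b) (B a z), ← sub_eq_zero, ← neg_eq_zero, ← hj]
  abel

theorem map_bracket_comp_of_commute (hα : ∀ x y : L, α (B x y) = B (α x) (α y))
    (f : L →ₗ[R] L) (hfα : ∀ x : L, f (α x) = α (f x)) (x y : L) :
    α (B (f x) y) = B (f (α x)) (α y) := by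
  rw [hα, hfα]

theorem leftSymm_sub_eq_bracket_alpha (hskew : ∀ x y : L, B x y = - B y x)
    (hjac : ∀ x y z : L, B (B x y) (α z) + B (B z x) (α y) + B (B y z) (α x) = 0)
    (f : L →ₗ[R] L) (hfα : ∀ x : L, f (α x) = α (f x)) (x y z : L) :
    (B (f (B (f x) y)) (α z) - B (f (α x)) (B (f y) z)) -
        (B (f (B (f y) x)) (α z) - B (f (α y)) (B (f x) z)) =
      B (f (B (f x) y + B x (f y)) - B (f x) (f y)) (α z) := by
  rw [hfα, hfα, hskew (f y) x]
  simp only [map_add, map_sub, map_neg, LinearMap.add_apply, LinearMap.sub_apply,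
    LinearMap.neg_apply]
  rw [← homJacobi_leibniz B α hskew hjac (f x) (f y) z]
  abel

end HomLie

theorem hom_lie_star_hom_novikov_iff
    {K L : Type*} [Field K] [AddCommGroup L] [Module K L]
    (B : L →ₗ[K] L →ₗ[K] L)
    (hskew : ∀ x y : L, B x y = - B y x)
    (α : L →ₗ[K] L) (hα : ∀ x y : L, α (B x y) = B (α x) (α y))
    (hjac : ∀ x y z : L, B (B x y) (α z) + B (B z x) (α y) + B (B y z) (α x) = 0)
    (f : L →ₗ[K] L) (hfα : ∀ x : L, f (α x) = α (f x))
    (s : L → L → L) (hs : ∀ x y : L, s x y = B (f x) y) :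
    ((∀ x y : L, α (s x y) = s (α x) (α y)) ∧
     (∀ x y z : L,
       s (s x y) (α z) - s (α x) (s y z) =
       s (s y x) (α z) - s (α y) (s x z)) ∧
     (∀ x y z : L, s (s x y) (α z) = s (s x z) (α y))) ↔
    ((∀ x y u : L, B (f (B (f x) y + B x (f y)) - B (f x) (f y)) (α u) = 0) ∧
     (∀ x y z : L, B (f (B (f x) y)) (α z) = B (f (B (f x) z)) (α y))) := by
  obtain rfl : s = fun x y => B (f x) y := funext₂ hs
  have key := leftSymm_sub_eq_bracket_alpha B α hskew hjac f hfα
  constructor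
  · rintro ⟨-, hleft, hright⟩
    exact ⟨fun x y u => by rw [← key, sub_eq_zero.mpr (hleft x y u)], hright⟩
  · rintro ⟨hcentral, hright⟩
    refine ⟨map_bracket_comp_of_commute B α hα f hfα, fun x y z => ?_, hright⟩
    exact sub_eq_zero.mp ((key x y z).trans (hcentral x y z))
end

section
/- Let (L, [−,−], α) be a Hom-Lie algebra and f: L → L linear with fα = αf. Define x ⋆′ y = [x, f(y)]. Then (L, ⋆′, α) is a Hom-Novikov algebra if and only if for all x,y,z ∈ L: [[x,f(y)] + [f(x),y], f(α(z))] − [α(x), f([y,f(z)])] + [α(y), f([x,f(z)])] = 0 and [f(x), f(y)] ∈ Z(α(L)), where Z(α(L)) = {w ∈ L : [w, α(u)] = 0 for all u ∈ L}. -/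
/-!
Multiplicativity of `x ⋆′ y = [x, f y]` with respect to `α` is automatic once `f α = α f`.
The Hom-left-symmetric identity is the first condition rewritten by skew-symmetry, and the
Hom-Jacobi identity for `(x, f y, f z)` shows that `(x ⋆′ y) ⋆′ α z = (x ⋆′ z) ⋆′ α y` holds exactly
when `[[f y, f z], α x] = 0`.
-/

section HomLie

variable {K L : Type*} [CommRing K] [AddCommGroup L] [Module K L]
  (B : L →ₗ[K] L →ₗ[K] L) (α f : L →ₗ[K] L)

lemma hom_jacobi_right_comm_iff
    (hskew : ∀ x y : L, B x y = - B y x)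
    (hjac : ∀ x y z : L, B (B x y) (α z) + B (B z x) (α y) + B (B y z) (α x) = 0)
    (x y z : L) :
    B (B x y) (α z) = B (B x z) (α y) ↔ B (B y z) (α x) = 0 := by
  have hjac' : B (B x y) (α z) - B (B x z) (α y) + B (B y z) (α x) = 0 := by
    rw [sub_eq_add_neg, ← LinearMap.neg_apply, ← map_neg, ← hskew]
    exact hjac x y z
  constructor
  · intro h
    rwa [h, sub_self, zero_add] at hjac'
  · intro h
    rwa [h, add_zero, sub_eq_zero] at hjac'

lemma map_bracket_apply_right_of_commute
    (hα : ∀ x y : L, α (B x y) = B (α x) (α y)) (hfα : ∀ x : L, f (α x) = α (f x))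
    (x y : L) :
    α (B x (f y)) = B (α x) (f (α y)) := by
  rw [hα, hfα]

lemma hom_left_symm_iff (hskew : ∀ x y : L, B x y = - B y x) (x y z : L) :
    B (B x (f y)) (f (α z)) - B (α x) (f (B y (f z))) =
        B (B y (f x)) (f (α z)) - B (α y) (f (B x (f z))) ↔
      B (B x (f y) + B (f x) y) (f (α z)) - B (α x) (f (B y (f z)))
        + B (α y) (f (B x (f z))) = 0 := by
  rw [hskew (f x) y, map_add, map_neg, LinearMap.add_apply, LinearMap.neg_apply]
  constructor <;> intro h <;> linear_combination (norm := module) h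

lemma hom_right_comm_iff
    (hskew : ∀ x y : L, B x y = - B y x)
    (hjac : ∀ x y z : L, B (B x y) (α z) + B (B z x) (α y) + B (B y z) (α x) = 0)
    (hfα : ∀ x : L, f (α x) = α (f x)) (x y z : L) :
    B (B x (f y)) (f (α z)) = B (B x (f z)) (f (α y)) ↔ B (B (f y) (f z)) (α x) = 0 := by
  rw [hfα, hfα]
  exact hom_jacobi_right_comm_iff B α hskew hjac x (f y) (f z)

end HomLie

theorem hom_lie_star_prime_hom_novikov_iff
    {K L : Type*} [Field K] [AddCommGroup L] [Module K L]
    (B : L →ₗ[K] L →ₗ[K] L)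
    (hskew : ∀ x y : L, B x y = - B y x)
    (α : L →ₗ[K] L) (hα : ∀ x y : L, α (B x y) = B (α x) (α y))
    (hjac : ∀ x y z : L, B (B x y) (α z) + B (B z x) (α y) + B (B y z) (α x) = 0)
    (f : L →ₗ[K] L) (hfα : ∀ x : L, f (α x) = α (f x))
    (s : L → L → L) (hs : ∀ x y : L, s x y = B x (f y)) :
    ((∀ x y : L, α (s x y) = s (α x) (α y)) ∧
     (∀ x y z : L,
       s (s x y) (α z) - s (α x) (s y z) =
       s (s y x) (α z) - s (α y) (s x z)) ∧
     (∀ x y z : L, s (s x y) (α z) = s (s x z) (α y))) ↔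
    ((∀ x y z : L,
       B (B x (f y) + B (f x) y) (f (α z)) - B (α x) (f (B y (f z)))
         + B (α y) (f (B x (f z))) = 0) ∧
     (∀ x y u : L, B (B (f x) (f y)) (α u) = 0)) := by
  obtain rfl : s = fun x y => B x (f y) := funext₂ hs
  have right_comm : (∀ x y z : L, B (B x (f y)) (f (α z)) = B (B x (f z)) (f (α y))) ↔
      ∀ x y u : L, B (B (f x) (f y)) (α u) = 0 :=
    ⟨fun h x y u => (hom_right_comm_iff B α f hskew hjac hfα u x y).1 (h u x y),
      fun h x y z => (hom_right_comm_iff B α f hskew hjac hfα x y z).2 (h y z x)⟩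
  simp only [map_bracket_apply_right_of_commute B α f hα hfα, forall_const, true_and,
    hom_left_symm_iff B α f hskew, right_comm]
end

section
/- Let (L, [−,−], α) be a Hom-Lie algebra and f linear with fα = αf. For the product x ⋆′ y = [x, f(y)], the identity (x ⋆′ y) ⋆′ α(z) = (x ⋆′ z) ⋆′ α(y) holds for all x,y,z if and only if [[f(y), f(z)], α(x)] = 0 for all x,y,z ∈ L. -/
/-!
Hom-Jacobi at `(x, f y, f z)`, with one bracket flipped by skew-symmetry, reads
`(x ⋆′ y) ⋆′ α z - (x ⋆′ z) ⋆′ α y = -[[f y, f z], α x]` once `f α = α f` is used;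
so the left side vanishes exactly when the right side does.
-/

theorem hom_jacobi_sub_eq_neg {R L : Type*} [CommRing R] [AddCommGroup L] [Module R L]
    {B : L →ₗ[R] L →ₗ[R] L} (hskew : ∀ x y : L, B x y = - B y x) {α : L →ₗ[R] L}
    (hjac : ∀ x y z : L, B (B x y) (α z) + B (B z x) (α y) + B (B y z) (α x) = 0)
    (x a b : L) :
    B (B x a) (α b) - B (B x b) (α a) = - B (B a b) (α x) := by
  have h := hjac x a b
  rw [hskew b x, map_neg, LinearMap.neg_apply] at h
  rw [sub_eq_add_neg]
  exact eq_neg_of_add_eq_zero_left h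

theorem star_prime_novikov_identity_iff_general
    {K L : Type*} [Field K] [AddCommGroup L] [Module K L]
    (B : L →ₗ[K] L →ₗ[K] L)
    (hskew : ∀ x y : L, B x y = - B y x)
    (α : L →ₗ[K] L)
    (hjac : ∀ x y z : L, B (B x y) (α z) + B (B z x) (α y) + B (B y z) (α x) = 0)
    (f : L →ₗ[K] L) (hfα : ∀ x : L, f (α x) = α (f x)) :
    (∀ x y z : L, B (B x (f y)) (f (α z)) = B (B x (f z)) (f (α y))) ↔
    (∀ x y z : L, B (B (f y) (f z)) (α x) = 0) := by
  refine forall_congr' fun x => forall_congr' fun y => forall_congr' fun z => ?_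
  rw [hfα, hfα, ← sub_eq_zero, hom_jacobi_sub_eq_neg hskew hjac, neg_eq_zero]

theorem star_prime_novikov_identity_iff
    {K L : Type*} [Field K] [AddCommGroup L] [Module K L]
    (B : L →ₗ[K] L →ₗ[K] L)
    (hskew : ∀ x y : L, B x y = - B y x)
    (α : L →ₗ[K] L) (hα : ∀ x y : L, α (B x y) = B (α x) (α y))
    (hjac : ∀ x y z : L, B (B x y) (α z) + B (B z x) (α y) + B (B y z) (α x) = 0)
    (f : L →ₗ[K] L) (hfα : ∀ x : L, f (α x) = α (f x)) :
    (∀ x y z : L, B (B x (f y)) (f (α z)) = B (B x (f z)) (f (α y))) ↔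
    (∀ x y z : L, B (B (f y) (f z)) (α x) = 0) :=
  star_prime_novikov_identity_iff_general B hskew α hjac f hfα
end

section
/- Let (L, [−,−], α) be a Hom-Lie algebra and f linear with fα = αf. For the product x ⋆ y = [f(x), y], the left-Hom-symmetry identity (x⋆y)⋆α(z) − α(x)⋆(y⋆z) = (y⋆x)⋆α(z) − α(y)⋆(x⋆z) holds for all x,y,z if and only if [f([f(x),y]) + f([x,f(y)]) − [f(x),f(y)], α(z)] = 0 for all x,y,z ∈ L. -/
/-!
Rewriting the Hom-Jacobi identity as the α-twisted Leibniz rule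
`[α a, [b, z]] = [[a, b], α z] + [α b, [a, z]]` and applying it to `a = f x`, `b = f y`
(using `f α = α f`) shows that the difference of the two sides of the left-Hom-symmetry
identity is exactly `[f [f x, y] + f [x, f y] - [f x, f y], α z]`.
-/

section HomLie

variable {R L : Type*} [CommSemiring R] [AddCommGroup L] [Module R L]
  {B : L →ₗ[R] L →ₗ[R] L} {α : L →ₗ[R] L}

theorem hom_leibniz (hskew : ∀ x y : L, B x y = - B y x)
    (hjac : ∀ x y z : L, B (B x y) (α z) + B (B z x) (α y) + B (B y z) (α x) = 0)
    (a b c : L) :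
    B (α a) (B b c) = B (B a b) (α c) + B (α b) (B a c) := by
  have hca : B (B c a) (α b) = B (α b) (B a c) := by
    rw [hskew (B c a), hskew c, map_neg, neg_neg]
  rw [hskew (α a), ← hca]
  linear_combination (norm := abel) -hjac a b c

theorem bracket_sub_eq_left_hom_symmetry_defect (hskew : ∀ x y : L, B x y = - B y x)
    (hjac : ∀ x y z : L, B (B x y) (α z) + B (B z x) (α y) + B (B y z) (α x) = 0)
    {f : L →ₗ[R] L} (hfα : ∀ x : L, f (α x) = α (f x)) (x y z : L) :
    B (f (B (f x) y) + f (B x (f y)) - B (f x) (f y)) (α z) =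
      (B (f (B (f x) y)) (α z) - B (f (α x)) (B (f y) z)) -
      (B (f (B (f y) x)) (α z) - B (f (α y)) (B (f x) z)) := by
  rw [hfα, hfα, hom_leibniz hskew hjac (f x), hskew (f y) x]
  simp only [map_add, map_sub, map_neg, LinearMap.add_apply, LinearMap.sub_apply,
    LinearMap.neg_apply]
  abel

end HomLie

theorem star_left_hom_symmetry_iff_general
    {K L : Type*} [Field K] [AddCommGroup L] [Module K L]
    (B : L →ₗ[K] L →ₗ[K] L)
    (hskew : ∀ x y : L, B x y = - B y x)
    (α : L →ₗ[K] L)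
    (hjac : ∀ x y z : L, B (B x y) (α z) + B (B z x) (α y) + B (B y z) (α x) = 0)
    (f : L →ₗ[K] L) (hfα : ∀ x : L, f (α x) = α (f x)) :
    (∀ x y z : L,
      B (f (B (f x) y)) (α z) - B (f (α x)) (B (f y) z) =
      B (f (B (f y) x)) (α z) - B (f (α y)) (B (f x) z)) ↔
    (∀ x y z : L,
      B (f (B (f x) y) + f (B x (f y)) - B (f x) (f y)) (α z) = 0) := by
  refine forall₃_congr fun x y z => ?_
  rw [bracket_sub_eq_left_hom_symmetry_defect hskew hjac hfα, sub_eq_zero]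

theorem star_left_hom_symmetry_iff
    {K L : Type*} [Field K] [AddCommGroup L] [Module K L]
    (B : L →ₗ[K] L →ₗ[K] L)
    (hskew : ∀ x y : L, B x y = - B y x)
    (α : L →ₗ[K] L) (hα : ∀ x y : L, α (B x y) = B (α x) (α y))
    (hjac : ∀ x y z : L, B (B x y) (α z) + B (B z x) (α y) + B (B y z) (α x) = 0)
    (f : L →ₗ[K] L) (hfα : ∀ x : L, f (α x) = α (f x)) :
    (∀ x y z : L,
      B (f (B (f x) y)) (α z) - B (f (α x)) (B (f y) z) =
      B (f (B (f y) x)) (α z) - B (f (α y)) (B (f x) z)) ↔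
    (∀ x y z : L,
      B (f (B (f x) y) + f (B x (f y)) - B (f x) (f y)) (α z) = 0) :=
  star_left_hom_symmetry_iff_general B hskew α hjac f hfα
end

section
/- Let (A, μ) be an associative commutative algebra and D: A → A a nilpotent derivation with Dⁿ = 0 for some n ≥ 2. Then the formal exponential E = exp(D) = Σ_{k=0}^{n−1} Dᵏ/k! is an algebra automorphism of A, and the product x * y = E(xD(y)) makes (A, *, E) a Hom-Novikov algebra. -/
/-!
`E = exp D` is Mathlib's exponential of the nilpotent endomorphism `D`, once `A` is viewed as a
`ℚ`-module through `ℚ → K`; it is therefore a unit of `End A`, it commutes with `D`, and it is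
multiplicative because `D` is a derivation. By Gelfand–Dorfman, `x ∘ y = x * D y` is a Novikov
product on the commutative algebra `A`, and `E`, being multiplicative and commuting with `D`, is
an endomorphism of it. Twisting a Novikov product by an endomorphism `E` (Yau's construction)
gives the Hom-Novikov product `x * y = E (x ∘ y)` with twisting map `E`.
-/

open Finset

theorem Module.End.sum_range_factorial_inv_smul_pow_eq_exp {K M : Type*} [Field K] [CharZero K]
    [AddCommGroup M] [Module K M] [Module ℚ M] [SMulCommClass K ℚ M] [IsScalarTower ℚ K M]
    {f : Module.End K M} {n : ℕ} (hf : f ^ n = 0) :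
    ∑ k ∈ range n, ((k.factorial : K)⁻¹) • f ^ k = IsNilpotent.exp f := by
  rw [IsNilpotent.exp_eq_sum hf]
  refine sum_congr rfl fun k _ => LinearMap.ext fun x => ?_
  rw [LinearMap.smul_apply, LinearMap.smul_apply, ← algebraMap_smul K ((k.factorial : ℚ)⁻¹),
    map_inv₀, map_natCast]

structure IsHomNovikov {A : Type*} [Sub A] (mul : A → A → A) (α : A → A) : Prop where
  map_mul : ∀ x y, α (mul x y) = mul (α x) (α y)
  left_symm : ∀ x y z,
    mul (mul x y) (α z) - mul (α x) (mul y z) = mul (mul y x) (α z) - mul (α y) (mul x z)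
  right_comm : ∀ x y z, mul (mul x y) (α z) = mul (mul x z) (α y)

theorem isHomNovikov_mul_derivation {A : Type*} [CommRing A] (D : A → A)
    (hD : ∀ x y, D (x * y) = D x * y + x * D y) :
    IsHomNovikov (fun x y => x * D y) id where
  map_mul _ _ := rfl
  left_symm x y z := by
    simp only [id, hD]
    ring
  right_comm x y z := by
    simp only [id]
    ring

theorem IsHomNovikov.twist {A F : Type*} [AddGroup A] [FunLike F A A] [AddMonoidHomClass F A A]
    {mul : A → A → A} (h : IsHomNovikov mul id) (α : F)
    (hα : ∀ x y, α (mul x y) = mul (α x) (α y)) :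
    IsHomNovikov (fun x y => α (mul x y)) α where
  map_mul x y := by rw [hα]
  left_symm x y z := by
    simp only [← hα, ← map_sub]
    simpa using congrArg (fun a => α (α a)) (h.left_symm x y z)
  right_comm x y z := by
    simp only [← hα]
    simpa using congrArg (fun a => α (α a)) (h.right_comm x y z)

open Finset in
theorem nilpotent_derivation_exp_hom_novikov_general
    {K A : Type*} [Field K] [CharZero K] [CommRing A] [Algebra K A]
    (D : A →ₗ[K] A) (hD : ∀ x y : A, D (x * y) = D x * y + x * D y)
    (n : ℕ) (hDn : D ^ n = 0)
    (E : A →ₗ[K] A)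
    (hE : E = ∑ k ∈ Finset.range n, ((k.factorial : K)⁻¹) • (D ^ k))
    (s : A → A → A) (hs : ∀ x y : A, s x y = E (x * D y)) :
    (∀ x y : A, E (x * y) = E x * E y) ∧ Function.Bijective E ∧
    (∀ x y : A, E (s x y) = s (E x) (E y)) ∧
    (∀ x y z : A,
      s (s x y) (E z) - s (E x) (s y z) =
      s (s y x) (E z) - s (E y) (s x z)) ∧
    (∀ x y z : A, s (s x y) (E z) = s (s x z) (E y)) := by
  let : Module ℚ A := Module.compHom A (algebraMap ℚ K)
  have : SMulCommClass K ℚ A := ⟨fun k q a => smul_comm k (algebraMap ℚ K q) a⟩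
  have : IsScalarTower ℚ K A := ⟨fun q k a => by rw [Algebra.smul_def q k, mul_smul]; rfl⟩
  have hnil : IsNilpotent D := ⟨n, hDn⟩
  obtain rfl : E = IsNilpotent.exp D :=
    hE.trans (Module.End.sum_range_factorial_inv_smul_pow_eq_exp hDn)
  have hmul : ∀ x y, IsNilpotent.exp D (x * y) = IsNilpotent.exp D x * IsNilpotent.exp D y :=
    Module.End.exp_mul_of_derivation K A D (fun x y => (hD x y).trans (add_comm _ _)) hnil
  have hcomm : ∀ x, IsNilpotent.exp D (D x) = D (IsNilpotent.exp D x) :=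
    LinearMap.congr_fun (Module.End.commute_exp_left_of_commute hnil hnil rfl)
  obtain rfl : s = fun x y => IsNilpotent.exp D (x * D y) := funext fun x => funext (hs x)
  obtain ⟨hmap, hleft, hright⟩ := (isHomNovikov_mul_derivation D hD).twist (IsNilpotent.exp D)
    fun x y => by rw [hmul, hcomm]
  exact ⟨hmul, (Module.End.isUnit_iff _).mp hnil.isUnit_exp, hmap, hleft, hright⟩

open Finset in
theorem nilpotent_derivation_exp_hom_novikov
    {K A : Type*} [Field K] [CharZero K] [CommRing A] [Algebra K A]
    (D : A →ₗ[K] A) (hD : ∀ x y : A, D (x * y) = D x * y + x * D y)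
    (n : ℕ) (hn : 2 ≤ n) (hDn : D ^ n = 0)
    (E : A →ₗ[K] A)
    (hE : E = ∑ k ∈ Finset.range n, ((k.factorial : K)⁻¹) • (D ^ k))
    (s : A → A → A) (hs : ∀ x y : A, s x y = E (x * D y)) :
    (∀ x y : A, E (x * y) = E x * E y) ∧ Function.Bijective E ∧
    (∀ x y : A, E (s x y) = s (E x) (E y)) ∧
    (∀ x y z : A,
      s (s x y) (E z) - s (E x) (s y z) =
      s (s y x) (E z) - s (E y) (s x z)) ∧
    (∀ x y z : A, s (s x y) (E z) = s (s x z) (E y)) :=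
  nilpotent_derivation_exp_hom_novikov_general D hD n hDn E hE s hs
end

section
/- Let k[x] be the polynomial algebra in one variable over a field k of characteristic 0, D = d/dx, and α the algebra endomorphism determined by α(x) = x + c for a fixed c ∈ k. Then Dα = αD, and consequently the product f * g = α(f · D(g)) makes (k[x], *, α) a Hom-Novikov algebra. -/
/-!
The shift `p ↦ p(x + c)` commutes with `d/dx` by the chain rule, since `d/dx (x + c) = 1`.
Hence it is an endomorphism of the Novikov algebra `f ∘ g = f · g'` (Gelfand–Dorfman), and
twisting a Novikov product by an endomorphism `α` of it, `f * g = α (f ∘ g)`, gives a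
Hom-Novikov algebra (Yau twisting): each Hom-Novikov identity is `α ∘ α` applied to the
corresponding Novikov identity.
-/

section YauTwist

variable {A : Type*}

def yauTwist (α : A → A) (μ : A → A → A) (a b : A) : A := α (μ a b)

variable {μ : A → A → A}

theorem yauTwist_left_symm {F : Type*} [AddCommGroup A] [FunLike F A A]
    [AddMonoidHomClass F A A] (α : F)
    (hα : ∀ a b, α (μ a b) = μ (α a) (α b))
    (hμ : ∀ a b c, μ (μ a b) c - μ a (μ b c) = μ (μ b a) c - μ b (μ a c)) (a b c : A) :
    yauTwist α μ (yauTwist α μ a b) (α c) - yauTwist α μ (α a) (yauTwist α μ b c) =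
      yauTwist α μ (yauTwist α μ b a) (α c) - yauTwist α μ (α b) (yauTwist α μ a c) := by
  simp only [yauTwist, ← hα, ← map_sub, hμ]

variable {α : A → A}

theorem apply_yauTwist (hα : ∀ a b, α (μ a b) = μ (α a) (α b)) (a b : A) :
    α (yauTwist α μ a b) = yauTwist α μ (α a) (α b) := by
  simp only [yauTwist, hα]

theorem yauTwist_right_comm (hα : ∀ a b, α (μ a b) = μ (α a) (α b))
    (hμ : ∀ a b c, μ (μ a b) c = μ (μ a c) b) (a b c : A) :
    yauTwist α μ (yauTwist α μ a b) (α c) = yauTwist α μ (yauTwist α μ a c) (α b) := by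
  simp only [yauTwist, ← hα, hμ]

end YauTwist

namespace Polynomial

variable {R : Type*} [CommRing R]

theorem derivative_aeval_X_add_C (c : R) (p : R[X]) :
    derivative (aeval (X + C c) p) = aeval (X + C c) (derivative p) := by
  rw [← comp_eq_aeval, ← comp_eq_aeval, derivative_comp, derivative_X_add_C, one_mul]

/-- Both sides equal `-f g h''`. -/
theorem mul_derivative_left_symm (f g h : R[X]) :
    f * derivative g * derivative h - f * derivative (g * derivative h) =
      g * derivative f * derivative h - g * derivative (f * derivative h) := by
  simp only [derivative_mul]
  ring

theorem aeval_X_add_C_mul_derivative (c : R) (f g : R[X]) :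
    aeval (X + C c) (f * derivative g) =
      aeval (X + C c) f * derivative (aeval (X + C c) g) := by
  rw [map_mul, derivative_aeval_X_add_C]

end Polynomial

open Polynomial in
theorem polynomial_shift_hom_novikov_general
    {k : Type*} [Field k] (c : k)
    (α : k[X] → k[X]) (hα : ∀ p : k[X], α p = Polynomial.aeval (X + C c) p)
    (s : k[X] → k[X] → k[X])
    (hs : ∀ f g : k[X], s f g = α (f * derivative g)) :
    (∀ p : k[X], derivative (α p) = α (derivative p)) ∧
    (∀ f g : k[X], α (s f g) = s (α f) (α g)) ∧
    (∀ f g h : k[X],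
      s (s f g) (α h) - s (α f) (s g h) =
      s (s g f) (α h) - s (α g) (s f h)) ∧
    (∀ f g h : k[X], s (s f g) (α h) = s (s f h) (α g)) := by
  obtain rfl : α = aeval (X + C c) := funext hα
  obtain rfl : s = yauTwist (aeval (X + C c)) (fun f g => f * derivative g) := funext₂ hs
  have hmul := aeval_X_add_C_mul_derivative c
  exact ⟨derivative_aeval_X_add_C c, apply_yauTwist hmul,
    yauTwist_left_symm (aeval (X + C c)) hmul mul_derivative_left_symm,
    yauTwist_right_comm hmul fun _ _ _ => mul_right_comm _ _ _⟩

open Polynomial in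
theorem polynomial_shift_hom_novikov
    {k : Type*} [Field k] [CharZero k] (c : k)
    (α : k[X] → k[X]) (hα : ∀ p : k[X], α p = Polynomial.aeval (X + C c) p)
    (s : k[X] → k[X] → k[X])
    (hs : ∀ f g : k[X], s f g = α (f * derivative g)) :
    (∀ p : k[X], derivative (α p) = α (derivative p)) ∧
    (∀ f g : k[X], α (s f g) = s (α f) (α g)) ∧
    (∀ f g h : k[X],
      s (s f g) (α h) - s (α f) (s g h) =
      s (s g f) (α h) - s (α g) (s f h)) ∧
    (∀ f g h : k[X], s (s f g) (α h) = s (s f h) (α g)) :=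
  polynomial_shift_hom_novikov_general c α hα s hs
end

section
/- Let A be the 2-dimensional complex Novikov algebra (N5) with basis {e₁, e₂} and products e₁e₁ = 0, e₁e₂ = e₁, e₂e₁ = 0, e₂e₂ = e₁ + e₂. Then every nonzero algebra morphism α: A → A has matrix of the form α(e₁) = e₁, α(e₂) = b e₁ + e₂ for some b ∈ ℂ; in particular, every nonzero algebra endomorphism of A is invertible. -/
/-!
Write α e₁ = (a, c) and α e₂ = (b, d). Comparing coordinates in α(e₁e₁) = 0, α(e₁e₂) = α e₁ and
α(e₂e₂) = α e₁ + α e₂ gives c² = 0, ad = a, d² = d and a + b = bd + d². Hence either d = 0,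
which forces a = b = 0 and so α = 0, or d = 1, which forces a = 1; then α is unitriangular.
-/

/-- The 2-dimensional complex Novikov algebra (N5): e₁e₂ = e₁, e₂e₂ = e₁ + e₂,
other basis products zero, extended bilinearly. -/
def muN5 : (Fin 2 → ℂ) → (Fin 2 → ℂ) → (Fin 2 → ℂ) :=
  fun u v => ![u 0 * v 1 + u 1 * v 1, u 1 * v 1]

local notation "e₁" => (![1, 0] : Fin 2 → ℂ)
local notation "e₂" => (![0, 1] : Fin 2 → ℂ)

lemma fin_two_eq_smul_add_smul (v : Fin 2 → ℂ) : v = v 0 • e₁ + v 1 • e₂ := by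
  ext i; fin_cases i <;> simp

lemma muN5_e₁_e₁ : muN5 e₁ e₁ = 0 := by
  ext i; fin_cases i <;> simp [muN5]

lemma muN5_e₁_e₂ : muN5 e₁ e₂ = e₁ := by
  ext i; fin_cases i <;> simp [muN5]

lemma muN5_e₂_e₂ : muN5 e₂ e₂ = e₁ + e₂ := by
  ext i; fin_cases i <;> simp [muN5]

lemma LinearMap.fin_two_apply (α : (Fin 2 → ℂ) →ₗ[ℂ] (Fin 2 → ℂ)) (v : Fin 2 → ℂ) :
    α v = v 0 • α e₁ + v 1 • α e₂ := by
  conv_lhs => rw [fin_two_eq_smul_add_smul v]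
  rw [map_add, map_smul, map_smul]

lemma LinearMap.bijective_of_apply_e₁_of_apply_e₂ {α : (Fin 2 → ℂ) →ₗ[ℂ] (Fin 2 → ℂ)} {b : ℂ}
    (h₁ : α e₁ = e₁) (h₂ : α e₂ = ![b, 1]) : Function.Bijective α := by
  have hsurj : Function.Surjective α := fun w => by
    refine ⟨![w 0 - b * w 1, w 1], ?_⟩
    rw [α.fin_two_apply, h₁, h₂]
    ext i; fin_cases i <;> simp [mul_comm]
  exact ⟨LinearMap.injective_iff_surjective.mpr hsurj, hsurj⟩

namespace muN5

variable {α : (Fin 2 → ℂ) →ₗ[ℂ] (Fin 2 → ℂ)} (hα : ∀ u v, α (muN5 u v) = muN5 (α u) (α v))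
include hα

lemma apply_e₁_one : α e₁ 1 = 0 := by
  have h := congrFun (hα e₁ e₁) 1
  rw [muN5_e₁_e₁, map_zero] at h
  exact mul_self_eq_zero.mp h.symm

lemma apply_e₁_zero_mul : α e₁ 0 * α e₂ 1 = α e₁ 0 := by
  have h := congrFun (hα e₁ e₂) 0
  rw [muN5_e₁_e₂] at h
  simpa [muN5, apply_e₁_one hα] using h.symm

lemma apply_e₂_one_mul_self : α e₂ 1 * α e₂ 1 = α e₂ 1 := by
  have h := congrFun (hα e₂ e₂) 1
  rw [muN5_e₂_e₂, map_add] at h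
  simpa [muN5, apply_e₁_one hα] using h.symm

lemma apply_e₁_zero_add_apply_e₂_zero : α e₁ 0 + α e₂ 0 = α e₂ 0 * α e₂ 1 + α e₂ 1 * α e₂ 1 := by
  have h := congrFun (hα e₂ e₂) 0
  rw [muN5_e₂_e₂, map_add] at h
  simpa [muN5] using h

lemma eq_zero_of_apply_e₂_one_eq_zero (hd : α e₂ 1 = 0) : α = 0 := by
  have ha : α e₁ 0 = 0 := by simpa [hd] using (apply_e₁_zero_mul hα).symm
  have hb : α e₂ 0 = 0 := by simpa [ha, hd] using apply_e₁_zero_add_apply_e₂_zero hα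
  have he₁ : α e₁ = 0 := by ext i; fin_cases i; exacts [ha, apply_e₁_one hα]
  have he₂ : α e₂ = 0 := by ext i; fin_cases i; exacts [hb, hd]
  refine LinearMap.ext fun v => ?_
  rw [α.fin_two_apply, he₁, he₂]
  simp

lemma apply_e₂_one_eq_one (hne : α ≠ 0) : α e₂ 1 = 1 := by
  have hd : α e₂ 1 ≠ 0 := fun hd => hne (eq_zero_of_apply_e₂_one_eq_zero hα hd)
  exact mul_left_cancel₀ hd ((apply_e₂_one_mul_self hα).trans (mul_one _).symm)

lemma apply_e₁_eq_e₁ (hd : α e₂ 1 = 1) : α e₁ = e₁ := by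
  have h := apply_e₁_zero_add_apply_e₂_zero hα
  rw [hd] at h
  have ha : α e₁ 0 = 1 := by linear_combination h
  ext i; fin_cases i; exacts [ha, apply_e₁_one hα]

end muN5

theorem N5_nonzero_morphisms
    (α : (Fin 2 → ℂ) →ₗ[ℂ] (Fin 2 → ℂ))
    (hα : ∀ u v, α (muN5 u v) = muN5 (α u) (α v))
    (hne : α ≠ 0) :
    (α ![1, 0] = ![1, 0] ∧ ∃ b : ℂ, α ![0, 1] = ![b, 1]) ∧
    Function.Bijective α := by
  have hd := muN5.apply_e₂_one_eq_one hα hne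
  have he₁ := muN5.apply_e₁_eq_e₁ hα hd
  have he₂ : α e₂ = ![α e₂ 0, 1] := by ext i; fin_cases i; exacts [rfl, hd]
  exact ⟨⟨he₁, _, he₂⟩, LinearMap.bijective_of_apply_e₁_of_apply_e₂ he₁ he₂⟩
end
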